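/- For p = 0.25, q = 0.2, r = 0.3, both feedback inner bounds coincide with the cut-set outer bound: Din1(0.25,0.2,0.3) = Din2(0.25,0.2,0.3) = Dout(0.25,0.2,0.3); hence the secrecy capacity region of this instance of the Dueck-type example with noiseless feedback is determined and the secret-key feedback strategy performs as well as the hybrid feedback strategy. -/
import Mathlib


/-- The binary entropy function to base 2, with the convention h(0)=h(1)=0
(automatic since `Real.logb 2 0 = 0`). -/
noncomputable def binEnt (x : ℝ) : ℝ := -x * Real.logb 2 x - (1 - x) * Real.logb 2 (1 - x)

/-- Non-feedback inner bound for the Dueck-type example with `Z₁ → Z₀ → Z₂`. -/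
noncomputable def Din (p q r : ℝ) : Set (ℝ × ℝ) :=
  {R : ℝ × ℝ | 0 ≤ R.1 ∧ R.1 ≤ 1 - binEnt q ∧ 0 ≤ R.2 ∧ R.2 ≤ 1 - binEnt r}

/-- Secret-key feedback inner bound for the Dueck-type example with `Z₁ → Z₀ → Z₂`. -/
noncomputable def Din1 (p q r : ℝ) : Set (ℝ × ℝ) :=
  {R : ℝ × ℝ | 0 ≤ R.1 ∧ 0 ≤ R.2 ∧ R.1 ≤ 1 ∧ R.2 ≤ 1 ∧
    R.1 ≤ 2 - binEnt p - binEnt q ∧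
    R.2 ≤ 2 - binEnt p - binEnt r ∧
    R.1 + R.2 ≤ 3 - binEnt p - binEnt q - binEnt r}

/-- Hybrid feedback inner bound for the Dueck-type example with `Z₁ → Z₀ → Z₂`. -/
noncomputable def Din2 (p q r : ℝ) : Set (ℝ × ℝ) :=
  {R : ℝ × ℝ | 0 ≤ R.1 ∧ 0 ≤ R.2 ∧ R.1 ≤ 1 + binEnt q ∧ R.2 ≤ 1 + binEnt r ∧
    R.1 ≤ 2 - binEnt p - binEnt q ∧
    R.2 ≤ 2 - binEnt p - binEnt r ∧
    R.1 + R.2 ≤ 3 - binEnt p - binEnt q - binEnt r}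

/-- Cut-set outer bound for the Dueck-type example with `Z₁ → Z₀ → Z₂`. -/
noncomputable def Dout (p q r : ℝ) : Set (ℝ × ℝ) :=
  {R : ℝ × ℝ | 0 ≤ R.1 ∧ 0 ≤ R.2 ∧
    R.1 ≤ 2 - binEnt p - binEnt q ∧
    R.2 ≤ 2 - binEnt p - binEnt r ∧
    R.1 + R.2 ≤ 3 - binEnt p - binEnt q - binEnt r}

lemma key1 : Real.log 2 * 12 + Real.log 3 * 15 ≤ Real.log 5 * 20 := by
  have h : Real.log ((3:ℝ)^15 * 2^12) ≤ Real.log ((5:ℝ)^20) := by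
    apply Real.log_le_log (by positivity)
    norm_num
  rw [Real.log_mul (by positivity) (by positivity), Real.log_pow, Real.log_pow,
    Real.log_pow] at h
  push_cast at h
  linarith

lemma key2 : Real.log 3 * 21 + Real.log 7 * 14 ≤ Real.log 2 * 40 + Real.log 5 * 20 := by
  have h : Real.log ((3:ℝ)^21 * 7^14) ≤ Real.log ((2:ℝ)^40 * 5^20) := by
    apply Real.log_le_log (by positivity)
    norm_num
  rw [Real.log_mul (by positivity) (by positivity),
    Real.log_mul (by positivity) (by positivity), Real.log_pow, Real.log_pow,
    Real.log_pow, Real.log_pow] at h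
  push_cast at h
  linarith

lemma l25 : Real.log 0.25 = -(2*Real.log 2) := by
  rw [show (0.25:ℝ) = ((2:ℝ)^2)⁻¹ by norm_num, Real.log_inv, Real.log_pow]
  push_cast; ring

lemma l75 : Real.log 0.75 = Real.log 3 - 2*Real.log 2 := by
  rw [show (0.75:ℝ) = 3/(2:ℝ)^2 by norm_num, Real.log_div (by norm_num) (by norm_num),
    Real.log_pow]
  push_cast; ring

lemma l02 : Real.log 0.2 = -Real.log 5 := by
  rw [show (0.2:ℝ) = (5:ℝ)⁻¹ by norm_num, Real.log_inv]

lemma l08 : Real.log 0.8 = 2*Real.log 2 - Real.log 5 := by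
  rw [show (0.8:ℝ) = (2:ℝ)^2/5 by norm_num, Real.log_div (by norm_num) (by norm_num),
    Real.log_pow]
  push_cast; ring

lemma l03 : Real.log 0.3 = Real.log 3 - (Real.log 2 + Real.log 5) := by
  rw [show (0.3:ℝ) = 3/(2*5) by norm_num, Real.log_div (by norm_num) (by norm_num),
    Real.log_mul (by norm_num) (by norm_num)]

lemma l07 : Real.log 0.7 = Real.log 7 - (Real.log 2 + Real.log 5) := by
  rw [show (0.7:ℝ) = 7/(2*5) by norm_num, Real.log_div (by norm_num) (by norm_num),
    Real.log_mul (by norm_num) (by norm_num)]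

lemma entq : (1:ℝ) ≤ binEnt 0.25 + binEnt 0.2 := by
  have l2pos : (0:ℝ) < Real.log 2 := Real.log_pos (by norm_num)
  have e : Real.log 2 * (binEnt 0.25 + binEnt 0.2)
      = (2/5)*Real.log 2 + Real.log 5 - (3/4)*Real.log 3 := by
    simp only [binEnt, Real.logb, show (1:ℝ) - 0.25 = 0.75 by norm_num,
      show (1:ℝ) - 0.2 = 0.8 by norm_num, l25, l75, l02, l08]
    field_simp
    ring
  have h := key1
  nlinarith [l2pos, e]

lemma entr : (1:ℝ) ≤ binEnt 0.25 + binEnt 0.3 := by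
  have l2pos : (0:ℝ) < Real.log 2 := Real.log_pos (by norm_num)
  have e : Real.log 2 * (binEnt 0.25 + binEnt 0.3)
      = 3*Real.log 2 + Real.log 5 - (21/20)*Real.log 3 - (7/10)*Real.log 7 := by
    simp only [binEnt, Real.logb, show (1:ℝ) - 0.25 = 0.75 by norm_num,
      show (1:ℝ) - 0.3 = 0.7 by norm_num, l25, l75, l03, l07]
    field_simp
    ring
  have h := key2
  nlinarith [l2pos, e]

lemma entq_nonneg : (0:ℝ) ≤ binEnt 0.2 := by
  have h1 : Real.logb 2 0.2 ≤ 0 :=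
    le_of_lt (Real.logb_neg (by norm_num) (by norm_num) (by norm_num))
  have h2 : Real.logb 2 (1 - 0.2) ≤ 0 :=
    le_of_lt (Real.logb_neg (by norm_num) (by norm_num) (by norm_num))
  unfold binEnt
  nlinarith

lemma entr_nonneg : (0:ℝ) ≤ binEnt 0.3 := by
  have h1 : Real.logb 2 0.3 ≤ 0 :=
    le_of_lt (Real.logb_neg (by norm_num) (by norm_num) (by norm_num))
  have h2 : Real.logb 2 (1 - 0.3) ≤ 0 :=
    le_of_lt (Real.logb_neg (by norm_num) (by norm_num) (by norm_num))
  unfold binEnt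
  nlinarith

/-- For `p = 0.25`, `q = 0.2`, `r = 0.3`, both feedback inner bounds coincide
with the cut-set outer bound, determining the secrecy capacity region. -/
theorem Din1_eq_Din2_eq_Dout :
    Din1 0.25 0.2 0.3 = Din2 0.25 0.2 0.3 ∧ Din2 0.25 0.2 0.3 = Dout 0.25 0.2 0.3 := by
  have hq := entq
  have hr := entr
  have hq0 := entq_nonneg
  have hr0 := entr_nonneg
  constructor
  · ext ⟨x, y⟩
    simp only [Din1, Din2, Set.mem_setOf_eq]
    constructor
    · rintro ⟨h1, h2, h3, h4, h5, h6, h7⟩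
      exact ⟨h1, h2, by linarith, by linarith, h5, h6, h7⟩
    · rintro ⟨h1, h2, h3, h4, h5, h6, h7⟩
      exact ⟨h1, h2, by linarith, by linarith, h5, h6, h7⟩
  · ext ⟨x, y⟩
    simp only [Din2, Dout, Set.mem_setOf_eq]
    constructor
    · rintro ⟨h1, h2, h3, h4, h5, h6, h7⟩
      exact ⟨h1, h2, h5, h6, h7⟩
    · rintro ⟨h1, h2, h5, h6, h7⟩
      exact ⟨h1, h2, by linarith, by linarith, h5, h6, h7⟩
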